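/- Let $g : (0,\infty) \to (0,\infty)$ be a nonincreasing function such that $1/g$ is concave, and let $x, y > 0$ with $0 < s \le y/x \le t$, $\alpha \in [0,1]$. Then $g(x^{1-\alpha} y^{\alpha}) \le \max\{K(s)^R, K(t)^R\} \, g(x)^{1-\alpha} g(y)^{\alpha}$, where $K(u) = (u+1)^2/(4u)$ and $R = \max\{\alpha, 1-\alpha\}$. -/

import Mathlib

/-!
With `K(u) = (u + 1)² / (4u)` and `m = (x + y) / 2`, the reverse Young inequality
`(1 - α) x + α y ≤ K(y/x)^R x^(1-α) y^α` reduces to Bernoulli's inequality for `(y/m)^|1-2α|`,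
and `K(y/x) ≤ max (K s) (K t)` because `K` decreases on `(0, 1]` and increases on `[1, ∞)`.
Hence with `λ = max (K s) (K t) ^ R ≥ 1` the weighted mean `A = (1 - α) x + α y` is at most
`λ · x^(1-α) y^α`. Since `g` is antitone, `g (x^(1-α) y^α) ≤ g (A / λ)`; since `1/g` is concave
and nonnegative it is subhomogeneous, so `g (A / λ) ≤ λ g A`; and concavity of `1/g` together
with the weighted AM-GM inequality gives `g A ≤ g(x)^(1-α) g(y)^α`.
-/

open Real Set Filter Topology

noncomputable def kantorovich (u : ℝ) : ℝ := (u + 1) ^ 2 / (4 * u)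

lemma one_le_kantorovich {u : ℝ} (hu : 0 < u) : 1 ≤ kantorovich u := by
  rw [kantorovich, le_div_iff₀ (by positivity)]
  nlinarith [sq_nonneg (u - 1)]

lemma kantorovich_pos {u : ℝ} (hu : 0 < u) : 0 < kantorovich u :=
  zero_lt_one.trans_le (one_le_kantorovich hu)

lemma kantorovich_inv (u : ℝ) : kantorovich u⁻¹ = kantorovich u := by
  rcases eq_or_ne u 0 with rfl | hu
  · simp [kantorovich]
  · unfold kantorovich
    field_simp
    ring

lemma kantorovich_antitoneOn : AntitoneOn kantorovich (Ioc 0 1) := by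
  intro a ha b hb hab
  unfold kantorovich
  have hab1 : a * b ≤ 1 := mul_le_one₀ ha.2 hb.1.le hb.2
  rw [div_le_div_iff₀ (by linarith [hb.1]) (by linarith [ha.1])]
  nlinarith [mul_nonneg (sub_nonneg.2 hab) (sub_nonneg.2 hab1), ha.1, hb.1]

lemma kantorovich_monotoneOn : MonotoneOn kantorovich (Ici 1) := by
  intro a ha b hb hab
  unfold kantorovich
  have ha' : (1 : ℝ) ≤ a := ha
  have hab1 : 1 ≤ a * b := one_le_mul_of_one_le_of_one_le ha' (ha'.trans hab)
  rw [div_le_div_iff₀ (by linarith) (by linarith)]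
  nlinarith [mul_nonneg (sub_nonneg.2 hab) (sub_nonneg.2 hab1)]

lemma kantorovich_le_max {s t u : ℝ} (hs : 0 < s) (hsu : s ≤ u) (hut : u ≤ t) :
    kantorovich u ≤ max (kantorovich s) (kantorovich t) := by
  rcases le_total u 1 with hu | hu
  · exact le_max_of_le_left (kantorovich_antitoneOn ⟨hs, hsu.trans hu⟩ ⟨hs.trans_le hsu, hu⟩ hsu)
  · exact le_max_of_le_right (kantorovich_monotoneOn hu (hu.trans hut) hut)

lemma one_add_mul_one_sub_le_rpow_neg {r β : ℝ} (hr : 0 < r) (hβ0 : 0 ≤ β) (hβ1 : β ≤ 1) :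
    1 + β * (1 - r) ≤ r ^ (-β) := by
  have hbern : r ^ β ≤ 1 + β * (r - 1) := by
    simpa using rpow_one_add_le_one_add_mul_self (s := r - 1) (by linarith) hβ0 hβ1
  have hrβ : 0 < r ^ β := rpow_pos_of_pos hr β
  -- multiplied by Bernoulli's bound the left side gives `1 - (β (r - 1))² ≤ 1`
  rw [rpow_neg hr.le, ← one_div, le_div_iff₀ hrβ]
  nlinarith [sq_nonneg (β * (r - 1))]

lemma reverse_young_of_le_half {x y α : ℝ} (hx : 0 < x) (hy : 0 < y) (hα0 : 0 ≤ α)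
    (hα : α ≤ 1 / 2) :
    (1 - α) * x + α * y ≤ kantorovich (y / x) ^ (1 - α) * (x ^ (1 - α) * y ^ α) := by
  -- the right side is `m (y/m)^(-(1 - 2α))` and the left side `m (1 + (1 - 2α)(1 - y/m))`
  set m := (x + y) / 2
  have hm : 0 < m := by positivity
  set q := y / m
  have hq : 0 < q := by positivity
  have hy_eq : y = m * q := (mul_div_cancel₀ y hm.ne').symm
  have hKx : kantorovich (y / x) * x = m * q⁻¹ := by
    simp only [kantorovich, q, m]
    field_simp
    ring
  have hrhs : kantorovich (y / x) ^ (1 - α) * (x ^ (1 - α) * y ^ α) = m * q ^ (-(1 - 2 * α)) := by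
    rw [← mul_assoc, ← mul_rpow ((kantorovich_pos (div_pos hy hx)).le) hx.le, hKx]
    rw [hy_eq, mul_rpow hm.le (inv_nonneg.2 hq.le), mul_rpow hm.le hq.le, inv_rpow hq.le,
      ← rpow_neg hq.le]
    calc m ^ (1 - α) * q ^ (-(1 - α)) * (m ^ α * q ^ α)
        = m ^ (1 - α) * m ^ α * (q ^ (-(1 - α)) * q ^ α) := by ring
      _ = m * q ^ (-(1 - 2 * α)) := by
        rw [← rpow_add hm, ← rpow_add hq, sub_add_cancel, rpow_one]
        ring_nf
  calc (1 - α) * x + α * y = m * (1 + (1 - 2 * α) * (1 - q)) := by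
        rw [mul_add, mul_one, mul_left_comm, mul_sub, mul_one, ← hy_eq]; ring
    _ ≤ m * q ^ (-(1 - 2 * α)) := by
        gcongr
        exact one_add_mul_one_sub_le_rpow_neg hq (by linarith) (by linarith)
    _ = _ := hrhs.symm

lemma reverse_young {x y α : ℝ} (hx : 0 < x) (hy : 0 < y) (hα0 : 0 ≤ α) (hα1 : α ≤ 1) :
    (1 - α) * x + α * y ≤ kantorovich (y / x) ^ max α (1 - α) * (x ^ (1 - α) * y ^ α) := by
  rcases le_total α (1 / 2) with hα | hα
  · rw [max_eq_right (by linarith)]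
    exact reverse_young_of_le_half hx hy hα0 hα
  · have := reverse_young_of_le_half hy hx (by linarith) (by linarith : 1 - α ≤ 1 / 2)
    rw [sub_sub_cancel, ← inv_div, kantorovich_inv] at this
    rw [max_eq_left (by linarith)]
    linarith [mul_comm (x ^ (1 - α)) (y ^ α)]

lemma ConcaveOn.map_mul_le_of_nonneg {φ : ℝ → ℝ} (hφ : ConcaveOn ℝ (Ioi 0) φ)
    (hφ0 : ∀ z ∈ Ioi (0 : ℝ), 0 ≤ φ z) {c z : ℝ} (hc : 1 ≤ c) (hz : 0 < z) :
    φ (c * z) ≤ c * φ z := by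
  have hcz : 0 < c * z := by positivity
  -- write `z` as a convex combination of `c * z` and a small `ε > 0`, drop `φ ε ≥ 0`, let `ε → 0`
  have hε : ∀ ε ∈ Ioo 0 z, (z - ε) * φ (c * z) ≤ (c * z - ε) * φ z := by
    rintro ε ⟨hε0, hεz⟩
    have hczε : 0 < c * z - ε := by nlinarith
    have hcomb := hφ.2 (mem_Ioi.2 hcz) (mem_Ioi.2 hε0)
      (div_nonneg (sub_nonneg.2 hεz.le) hczε.le)
      (div_nonneg (by nlinarith : 0 ≤ c * z - z) hczε.le)
      (by rw [← add_div, div_eq_one_iff_eq hczε.ne']; ring)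
    have hz_eq : (z - ε) / (c * z - ε) * (c * z) + (c * z - z) / (c * z - ε) * ε = z := by
      rw [div_mul_eq_mul_div, div_mul_eq_mul_div, ← add_div, div_eq_iff hczε.ne']
      ring
    simp only [smul_eq_mul, hz_eq] at hcomb
    have hφε := hφ0 ε hε0
    rw [div_mul_eq_mul_div, div_mul_eq_mul_div, ← add_div, div_le_iff₀ hczε] at hcomb
    nlinarith [mul_nonneg (by nlinarith : 0 ≤ c * z - z) hφε]
  have hlim : ∀ a b : ℝ, Tendsto (fun ε => (a - ε) * b) (𝓝[>] 0) (𝓝 (a * b)) := fun a b =>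
    tendsto_nhdsWithin_of_tendsto_nhds <|
      ((continuous_const.sub continuous_id).mul continuous_const).tendsto' 0 _ (by simp)
  have hlimit := le_of_tendsto_of_tendsto (hlim z (φ (c * z))) (hlim (c * z) (φ z))
    (eventually_of_mem (Ioo_mem_nhdsGT hz) hε)
  rw [mul_assoc, mul_left_comm] at hlimit
  exact le_of_mul_le_mul_left hlimit hz

lemma le_mul_map_mul_of_concaveOn_one_div {g : ℝ → ℝ}
    (hconc : ConcaveOn ℝ (Ioi 0) (fun x => 1 / g x)) (hpos : ∀ x ∈ Ioi (0 : ℝ), 0 < g x)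
    {c z : ℝ} (hc : 1 ≤ c) (hz : 0 < z) :
    g z ≤ c * g (c * z) := by
  have h := hconc.map_mul_le_of_nonneg (fun w hw => (one_div_pos.2 (hpos w hw)).le) hc hz
  have hcz : c * z ∈ Ioi (0 : ℝ) := mul_pos (zero_lt_one.trans_le hc) hz
  rw [mul_one_div, div_le_div_iff₀ (hpos _ hcz) (hpos z hz), one_mul] at h
  exact h

lemma map_add_le_rpow_mul_rpow_of_concaveOn_one_div {E : Type*} [AddCommGroup E] [Module ℝ E]
    {s : Set E} {g : E → ℝ} (hconc : ConcaveOn ℝ s (fun x => 1 / g x))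
    (hpos : ∀ x ∈ s, 0 < g x) {x y : E} (hx : x ∈ s) (hy : y ∈ s) {a b : ℝ} (ha : 0 ≤ a)
    (hb : 0 ≤ b) (hab : a + b = 1) :
    g (a • x + b • y) ≤ g x ^ a * g y ^ b := by
  have hgx := hpos x hx
  have hgy := hpos y hy
  have hmean : 1 / (g x ^ a * g y ^ b) ≤ 1 / g (a • x + b • y) := by
    calc 1 / (g x ^ a * g y ^ b) = (1 / g x) ^ a * (1 / g y) ^ b := by
          rw [div_rpow zero_le_one hgx.le, div_rpow zero_le_one hgy.le, one_rpow, one_rpow,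
            one_div_mul_one_div]
      _ ≤ a * (1 / g x) + b * (1 / g y) :=
          geom_mean_le_arith_mean2_weighted ha hb (by positivity) (by positivity) hab
      _ ≤ 1 / g (a • x + b • y) := hconc.2 hx hy ha hb hab
  exact (one_div_le_one_div (mul_pos (rpow_pos_of_pos hgx a) (rpow_pos_of_pos hgy b))
    (hpos _ (hconc.1 hx hy ha hb hab))).1 hmean

theorem stmt_19_general (g : ℝ → ℝ) (hmono : AntitoneOn g (Set.Ioi 0))
    (hpos : ∀ x ∈ Set.Ioi (0:ℝ), 0 < g x)
    (hconc : ConcaveOn ℝ (Set.Ioi 0) (fun x => 1 / g x))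
    (x y s t α : ℝ) (hx : 0 < x) (hy : 0 < y) (hs : 0 < s)
    (h1 : s ≤ y / x) (h2 : y / x ≤ t) (hα : α ∈ Set.Icc (0:ℝ) 1) :
    g (x ^ (1 - α) * y ^ α) ≤
      max (((s + 1)^2 / (4 * s)) ^ max α (1 - α)) (((t + 1)^2 / (4 * t)) ^ max α (1 - α)) *
        (g x ^ (1 - α) * g y ^ α) := by
  obtain ⟨hα0, hα1⟩ := hα
  set R := max α (1 - α)
  have hR : 0 ≤ R := le_max_of_le_left hα0
  change _ ≤ max (kantorovich s ^ R) (kantorovich t ^ R) * _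
  rw [← rpow_max ((kantorovich_pos hs).le)
    ((kantorovich_pos (hs.trans_le (h1.trans h2))).le) hR]
  set lam := max (kantorovich s) (kantorovich t) ^ R
  have hlam : 1 ≤ lam := one_le_rpow (le_max_of_le_left (one_le_kantorovich hs)) hR
  have hlam0 : 0 < lam := zero_lt_one.trans_le hlam
  set m := (1 - α) * x + α * y
  have hm : 0 < m := convex_Ioi (0 : ℝ) hx hy (sub_nonneg.2 hα1) hα0 (sub_add_cancel 1 α)
  have hyoung : m ≤ lam * (x ^ (1 - α) * y ^ α) := by
    refine (reverse_young hx hy hα0 hα1).trans ?_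
    gcongr
    exact rpow_le_rpow ((kantorovich_pos (div_pos hy hx)).le)
      (kantorovich_le_max hs h1 h2) hR
  calc g (x ^ (1 - α) * y ^ α) ≤ g (m / lam) :=
        hmono (div_pos hm hlam0) (mul_pos (rpow_pos_of_pos hx _) (rpow_pos_of_pos hy _))
          ((div_le_iff₀' hlam0).2 hyoung)
    _ ≤ lam * g (lam * (m / lam)) :=
        le_mul_map_mul_of_concaveOn_one_div hconc hpos hlam (div_pos hm hlam0)
    _ = lam * g m := by rw [mul_div_cancel₀ m hlam0.ne']
    _ ≤ lam * (g x ^ (1 - α) * g y ^ α) := by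
        gcongr
        exact map_add_le_rpow_mul_rpow_of_concaveOn_one_div hconc hpos hx hy (sub_nonneg.2 hα1)
          hα0 (sub_add_cancel 1 α)

theorem stmt_19 (g : ℝ → ℝ) (hmono : AntitoneOn g (Set.Ioi 0))
    (hpos : ∀ x ∈ Set.Ioi (0:ℝ), 0 < g x)
    (hconc : ConcaveOn ℝ (Set.Ioi 0) (fun x => 1 / g x))
    (x y s t α : ℝ) (hx : 0 < x) (hy : 0 < y) (hs : 0 < s) (hst : s ≤ t)
    (h1 : s ≤ y / x) (h2 : y / x ≤ t) (hα : α ∈ Set.Icc (0:ℝ) 1) :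
    g (x ^ (1 - α) * y ^ α) ≤
      max (((s + 1)^2 / (4 * s)) ^ max α (1 - α)) (((t + 1)^2 / (4 * t)) ^ max α (1 - α)) *
        (g x ^ (1 - α) * g y ^ α) :=
  stmt_19_general g hmono hpos hconc x y s t α hx hy hs h1 h2 hα
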